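/- Let T be a lower transition operator on a finite nonempty set 𝒳 with conjugate T̄ f := −T(−f), and define 𝒳_{RA} := {x ∈ 𝒳 : ∃ n ∈ ℕ, min T̄^n 𝟙_x > 0} and 𝒳'_{RA} := {x ∈ 𝒳 : ∃ n ∈ ℕ, ∀ k ≥ n, min T̄^k 𝟙_x > 0}. Then 𝒳'_{RA} = 𝒳_{RA}, and T is regularly absorbing if and only if 𝒳'_{RA} is nonempty and for every x ∈ 𝒳 \ 𝒳'_{RA} there is some n ∈ ℕ with T̄^n 𝟙_{𝒳∖𝒳'_{RA}}(x) < 1. -/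
import Mathlib


open Filter Topology

/-- The minimum of a real-valued function on a finite nonempty type. -/
noncomputable def minf {X : Type*} [Fintype X] [Nonempty X] (f : X → ℝ) : ℝ :=
  Finset.univ.inf' Finset.univ_nonempty f

/-- The maximum of a real-valued function on a finite nonempty type. -/
noncomputable def maxf {X : Type*} [Fintype X] [Nonempty X] (f : X → ℝ) : ℝ :=
  Finset.univ.sup' Finset.univ_nonempty f

/-- The (real-valued) indicator function of a set. -/
noncomputable def ind {X : Type*} (A : Set X) : X → ℝ := A.indicator 1

/-- The conjugate (upper) operator `f ↦ -(Q (-f))`. -/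
def conjOp {X : Type*} (Q : (X → ℝ) → (X → ℝ)) : (X → ℝ) → (X → ℝ) :=
  fun f => -(Q (-f))

/-- A lower transition rate operator. -/
def IsLTRO {X : Type*} [Fintype X] (Q : (X → ℝ) → (X → ℝ)) : Prop :=
  (∀ μ : ℝ, Q (fun _ => μ) = 0) ∧
  (∀ f g : X → ℝ, Q f + Q g ≤ Q (f + g)) ∧
  (∀ l : ℝ, 0 ≤ l → ∀ f : X → ℝ, Q (l • f) = l • Q f) ∧
  (∀ x y : X, x ≠ y → 0 ≤ Q (ind {y}) x)

/-- A lower transition operator. -/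
def IsLTO {X : Type*} [Fintype X] [Nonempty X] (T : (X → ℝ) → (X → ℝ)) : Prop :=
  (∀ f : X → ℝ, ∀ x : X, minf f ≤ T f x) ∧
  (∀ f g : X → ℝ, T f + T g ≤ T (f + g)) ∧
  (∀ l : ℝ, 0 ≤ l → ∀ f : X → ℝ, T (l • f) = l • T f)

/-- `T` is the family of operators solving `d/dt T_t f = Q (T_t f)` on `[0,∞)`
with `T_0 f = f`. -/
def IsSol {X : Type*} [Fintype X] (Q : (X → ℝ) → (X → ℝ))
    (T : ℝ → (X → ℝ) → (X → ℝ)) : Prop :=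
  (∀ f : X → ℝ, T 0 f = f) ∧
  (∀ f : X → ℝ, ∀ t : ℝ, 0 ≤ t →
    HasDerivWithinAt (fun s => T s f) (Q (T t f)) (Set.Ici 0) t)

/-- Ergodicity of a lower transition rate operator, expressed via its
associated time-dependent family `T`. -/
def ErgodicQ {X : Type*} [Fintype X] (T : ℝ → (X → ℝ) → (X → ℝ)) : Prop :=
  ∀ f : X → ℝ, ∃ c : ℝ, Tendsto (fun t => T t f) atTop (𝓝 (fun _ : X => c))

/-- Ergodicity of a lower transition operator. -/
def ErgodicT {X : Type*} [Fintype X] (T : (X → ℝ) → (X → ℝ)) : Prop :=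
  ∀ f : X → ℝ, ∃ c : ℝ, Tendsto (fun n : ℕ => T^[n] f) atTop (𝓝 (fun _ : X => c))

/-- `x` is upper reachable from `y` (w.r.t. the lower transition rate operator `Q`). -/
def upperReach {X : Type*} [Fintype X] (Q : (X → ℝ) → (X → ℝ)) (y x : X) : Prop :=
  ∃ (n : ℕ) (p : ℕ → X), p 0 = y ∧ p n = x ∧
    ∀ k : ℕ, k < n → p (k + 1) ≠ p k ∧ 0 < conjOp Q (ind {p (k + 1)}) (p k)

/-- One step of the lower-reachability construction: `A ↦ A ∪ {y ∉ A : Q(𝟙_A)(y) > 0}`. -/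
def lowerStep {X : Type*} [Fintype X] (Q : (X → ℝ) → (X → ℝ)) (A : Set X) : Set X :=
  A ∪ {y : X | y ∉ A ∧ 0 < Q (ind A) y}

/-- `A` is lower reachable from `x`: `x ∈ Aₙ` where `n` is the first index with
`Aₙ = Aₙ₊₁` (equivalently, any such index, since the sequence is determined by
recursion and increasing). -/
def lowerReach {X : Type*} [Fintype X] (Q : (X → ℝ) → (X → ℝ)) (x : X) (A : Set X) : Prop :=
  ∃ n : ℕ, (lowerStep Q)^[n] A = (lowerStep Q)^[n + 1] A ∧ x ∈ (lowerStep Q)^[n] A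

/-- The set `𝒳_RA := {x : ∃ n ≥ 1, min T̄ⁿ 𝟙ₓ > 0}`. -/
noncomputable def XRA {X : Type*} [Fintype X] [Nonempty X]
    (T : (X → ℝ) → (X → ℝ)) : Set X :=
  {x : X | ∃ n : ℕ, 0 < minf ((conjOp T)^[n + 1] (ind {x}))}

/-- A regularly absorbing lower transition operator. -/
def RegAbs {X : Type*} [Fintype X] [Nonempty X] (T : (X → ℝ) → (X → ℝ)) : Prop :=
  (XRA T).Nonempty ∧ ∀ x : X, x ∉ XRA T → ∃ n : ℕ, 0 < T^[n + 1] (ind (XRA T)) x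

/-- The set `𝒳_1A := {x : min T̄ 𝟙ₓ > 0}`. -/
noncomputable def X1A {X : Type*} [Fintype X] [Nonempty X]
    (T : (X → ℝ) → (X → ℝ)) : Set X :=
  {x : X | 0 < minf (conjOp T (ind {x}))}

/-- A 1-step absorbing lower transition operator. -/
def OneStepAbs {X : Type*} [Fintype X] [Nonempty X] (T : (X → ℝ) → (X → ℝ)) : Prop :=
  (X1A T).Nonempty ∧ ∀ x : X, x ∉ X1A T → 0 < T (ind (X1A T)) x

/-- The operator (sup) norm of a non-negatively homogeneous operator. -/
noncomputable def opN {X : Type*} [Fintype X] (Q : (X → ℝ) → (X → ℝ)) : ℝ :=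
  sSup {r : ℝ | ∃ f : X → ℝ, ‖f‖ = 1 ∧ r = ‖Q f‖}

/-- The set `𝒳'_RA := {x : ∃ n ≥ 1, ∀ k ≥ n, min T̄ᵏ 𝟙ₓ > 0}`. -/
noncomputable def XRA' {X : Type*} [Fintype X] [Nonempty X]
    (T : (X → ℝ) → (X → ℝ)) : Set X :=
  {x : X | ∃ n : ℕ, ∀ k : ℕ, n ≤ k → 0 < minf ((conjOp T)^[k + 1] (ind {x}))}

section aux15
variable {X : Type*} [Fintype X] [Nonempty X] {T : (X → ℝ) → (X → ℝ)}

lemma minf_le15 (f : X → ℝ) (x : X) : minf f ≤ f x :=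
  Finset.inf'_le _ (Finset.mem_univ x)

lemma minf_pos_iff15 (f : X → ℝ) : 0 < minf f ↔ ∀ x, 0 < f x := by
  constructor
  · intro h x; exact h.trans_le (minf_le15 f x)
  · intro h; exact (Finset.lt_inf'_iff _).2 fun x _ => h x

lemma T_zero15 (hT : IsLTO T) : T 0 = 0 := by
  have := hT.2.2 0 le_rfl 0
  simpa using this

lemma T_mono15 (hT : IsLTO T) {f g : X → ℝ} (h : f ≤ g) : T f ≤ T g := by
  intro x
  have h2 := hT.2.1 f (g - f) x
  have h1 := hT.1 (g - f) x
  have hmin : (0:ℝ) ≤ minf (g - f) :=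
    Finset.le_inf' _ _ fun y _ => sub_nonneg.2 (h y)
  have hfg : f + (g - f) = g := by ring
  rw [hfg] at h2
  simp only [Pi.add_apply] at h2
  linarith

lemma minf_const15 (c : ℝ) : minf (fun _ : X => c) = c :=
  le_antisymm (minf_le15 _ (Classical.arbitrary X))
    (Finset.le_inf' _ _ fun y _ => le_rfl)

lemma T_const15 (hT : IsLTO T) (c : ℝ) : T (fun _ => c) = fun _ => c := by
  funext x
  have hlow := hT.1 (fun _ => c) x
  rw [minf_const15] at hlow
  have hsum := hT.2.1 (fun _ => c) (fun _ => -c) x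
  have hz : ((fun _ : X => c) + fun _ => -c) = 0 := by funext y; simp
  rw [hz, T_zero15 hT] at hsum
  have hlow2 := hT.1 (fun _ => -c) x
  rw [minf_const15] at hlow2
  simp only [Pi.add_apply, Pi.zero_apply] at hsum
  linarith

lemma T_shift15 (hT : IsLTO T) (f : X → ℝ) (c : ℝ) :
    T (fun x => f x + c) = fun x => T f x + c := by
  funext x
  have h1 := hT.2.1 f (fun _ => c) x
  have e1 : (f + fun _ : X => c) = fun y => f y + c := rfl
  rw [e1, T_const15 hT] at h1
  have h2 := hT.2.1 (fun y => f y + c) (fun _ => -c) x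
  have e2 : ((fun y => f y + c) + fun _ : X => -c) = f := by funext y; simp
  rw [e2, T_const15 hT] at h2
  simp only [Pi.add_apply] at h1 h2
  linarith

lemma conj_one_sub15 (hT : IsLTO T) (g : X → ℝ) :
    T (fun x => 1 - g x) = fun x => 1 - conjOp T g x := by
  have h := T_shift15 hT (-g) 1
  funext x
  have e : (fun x => 1 - g x) = fun x => (-g) x + 1 := by funext y; simp; ring
  rw [e, h]
  simp [conjOp]
  ring

lemma conj_mono15 (hT : IsLTO T) {f g : X → ℝ} (h : f ≤ g) :
    conjOp T f ≤ conjOp T g := by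
  intro x
  have := T_mono15 hT (f := -g) (g := -f) (fun y => by simpa using h y) x
  simp only [conjOp, Pi.neg_apply]
  linarith

lemma conj_const15 (hT : IsLTO T) (c : ℝ) :
    conjOp T (fun _ => c) = fun _ => c := by
  funext x
  have e : (-(fun _ : X => c)) = fun _ : X => -c := by funext y; simp
  simp only [conjOp, e, T_const15 hT, Pi.neg_apply]
  ring

lemma conj_iter_ge15 (hT : IsLTO T) {g : X → ℝ} {ε : ℝ} (h : ∀ x, ε ≤ g x) (m : ℕ) :
    ∀ x, ε ≤ (conjOp T)^[m] g x := by
  induction m with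
  | zero => exact h
  | succ m ih =>
    intro x
    rw [Function.iterate_succ_apply']
    calc ε = conjOp T (fun _ => ε) x := by rw [conj_const15 hT]
    _ ≤ _ := conj_mono15 hT (fun y => ih y) x

lemma iter_dual15 (hT : IsLTO T) (A : Set X) (n : ℕ) :
    T^[n] (ind A) = fun x => 1 - (conjOp T)^[n] (ind Aᶜ) x := by
  induction n with
  | zero =>
    funext x
    by_cases hx : x ∈ A <;> simp [ind, Set.indicator, hx]
  | succ n ih =>
    rw [Function.iterate_succ_apply', Function.iterate_succ_apply', ih,
        conj_one_sub15 hT]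

end aux15

/-- `𝒳'_RA = 𝒳_RA`, and `T` is regularly absorbing iff `𝒳'_RA ≠ ∅` and for
every `x ∉ 𝒳'_RA` there is some `n` with `T̄ⁿ 𝟙_{𝒳∖𝒳'_RA}(x) < 1`. -/
theorem stmt15 {X : Type*} [Fintype X] [Nonempty X]
    (T : (X → ℝ) → (X → ℝ)) (hT : IsLTO T) :
    XRA' T = XRA T ∧
      (RegAbs T ↔
        ((XRA' T).Nonempty ∧
          ∀ x : X, x ∉ XRA' T →
            ∃ n : ℕ, (conjOp T)^[n + 1] (ind (XRA' T)ᶜ) x < 1)) := by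
  have hXX : XRA' T = XRA T := by
    ext x
    constructor
    · rintro ⟨n, hn⟩; exact ⟨n, hn n le_rfl⟩
    · rintro ⟨n, hn⟩
      refine ⟨n, fun k hk => ?_⟩
      have hiter : (conjOp T)^[k+1] (ind {x}) =
          (conjOp T)^[k-n] ((conjOp T)^[n+1] (ind {x})) := by
        rw [← Function.iterate_add_apply]
        congr 1
        omega
      rw [hiter, minf_pos_iff15]
      intro y
      exact lt_of_lt_of_le hn
        (conj_iter_ge15 hT (fun z => minf_le15 _ z) (k - n) y)
  refine ⟨hXX, ?_⟩
  rw [hXX]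
  unfold RegAbs
  refine and_congr Iff.rfl (forall_congr' fun x => imp_congr Iff.rfl
    (exists_congr fun n => ?_))
  have hd := congrFun (iter_dual15 hT (XRA T) (n + 1)) x
  rw [hd]
  constructor
  · intro h; linarith
  · intro h; linarith
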